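/- arXiv:2312.16458 — 2 statements merged into one kernel-verified Lean document; each statement's English description precedes it below -/
import Mathlib

section
/- Let μ^∞ and, for each n ∈ ℕ, μ^n be vectors of positive reals of length N such that μ^n_k → μ^∞_k as n → ∞ for each k ∈ {1,…,N}. Then the closed unit balls D_{μ^n} converge to D_{μ^∞} in the Hausdorff distance with respect to the C*-norm ‖·‖_A, i.e., Haus_{‖·‖_A}(D_{μ^n}, D_{μ^∞}) → 0 as n → ∞. -/
open Filter Topology

/-- The direct sum `A = ⊕ₖ M_{m k}(ℂ)`, realized as block operators on the Euclidean
spaces `ℂ^{m k}`; the `Pi` sup-norm is then exactly the C*-norm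
`‖a‖_A = maxₖ ‖a k‖`, where `‖a k‖` is the ℓ²→ℓ² operator norm of the `k`-th block. -/
noncomputable abbrev BlockAlg (N : ℕ) (m : Fin N → ℕ) : Type :=
  ∀ k : Fin N, EuclideanSpace ℂ (Fin (m k)) →L[ℂ] EuclideanSpace ℂ (Fin (m k))

noncomputable def hsNorm {N : ℕ} {m : Fin N → ℕ} (μ : Fin N → ℝ) (a : BlockAlg N m) : ℝ :=
  Real.sqrt (∑ k, (μ k / (m k : ℝ)) *
    (LinearMap.trace ℂ (EuclideanSpace ℂ (Fin (m k)))
      ((ContinuousLinearMap.adjoint (a k) ∘L a k :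
          EuclideanSpace ℂ (Fin (m k)) →L[ℂ] EuclideanSpace ℂ (Fin (m k))) :
        EuclideanSpace ℂ (Fin (m k)) →ₗ[ℂ] EuclideanSpace ℂ (Fin (m k)))).re)

noncomputable def hsBall {N : ℕ} {m : Fin N → ℕ} (μ : Fin N → ℝ) : Set (BlockAlg N m) :=
  {a | hsNorm μ a ≤ 1}

/-!
If the weights satisfy `μ ≤ t² ν` and `ν ≤ t² μ` coordinatewise, with `t ≥ 1`, then scaling by `t⁻¹`
maps each of the balls `D_μ`, `D_ν` into the other, and moves a point `a` by `(1 - t⁻¹) ‖a‖`.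
Since the operator norm of a block is at most its Hilbert–Schmidt norm, `D_ν` is bounded in
`‖·‖_A`, so the Hausdorff distance is `O(t - 1)`. Convergence of the weights lets `t` tend to `1`.
-/

open ContinuousLinearMap

section HilbertSchmidt

variable {𝕜 ι E F : Type*} [RCLike 𝕜] [Fintype ι] [NormedAddCommGroup E] [InnerProductSpace 𝕜 E]

theorem ContinuousLinearMap.re_trace_adjoint_comp_self [CompleteSpace E] [NormedAddCommGroup F]
    [InnerProductSpace 𝕜 F] [CompleteSpace F] (a : E →L[𝕜] F) (b : OrthonormalBasis ι 𝕜 E) :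
    RCLike.re (LinearMap.trace 𝕜 E ((adjoint a ∘L a : E →L[𝕜] E) : E →ₗ[𝕜] E)) =
      ∑ i, ‖a (b i)‖ ^ 2 := by
  rw [LinearMap.trace_eq_sum_inner _ b, map_sum]
  refine Finset.sum_congr rfl fun i _ => ?_
  rw [coe_coe, comp_apply, adjoint_inner_right, inner_self_eq_norm_sq]

theorem ContinuousLinearMap.opNorm_le_sqrt_sum_sq_norm_apply [SeminormedAddCommGroup F]
    [NormedSpace 𝕜 F] (a : E →L[𝕜] F) (b : OrthonormalBasis ι 𝕜 E) :
    ‖a‖ ≤ √(∑ i, ‖a (b i)‖ ^ 2) := by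
  refine a.opNorm_le_bound (Real.sqrt_nonneg _) fun x => ?_
  calc ‖a x‖ = ‖∑ i, inner 𝕜 (b i) x • a (b i)‖ := by
        conv_lhs => rw [← b.sum_repr' x]
        simp only [map_sum, map_smul]
    _ ≤ ∑ i, ‖inner 𝕜 (b i) x‖ * ‖a (b i)‖ := norm_sum_le_of_le _ fun i _ => norm_smul_le _ _
    _ ≤ √(∑ i, ‖inner 𝕜 (b i) x‖ ^ 2) * √(∑ i, ‖a (b i)‖ ^ 2) :=
        Real.sum_mul_le_sqrt_mul_sqrt _ _ _
    _ = √(∑ i, ‖a (b i)‖ ^ 2) * ‖x‖ := by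
        rw [b.sum_sq_norm_inner_right, Real.sqrt_sq (norm_nonneg x), mul_comm]

end HilbertSchmidt

theorem Metric.hausdorffDist_le_of_inv_smul_mem {E : Type*} [SeminormedAddCommGroup E]
    [NormedSpace ℝ E] {S T : Set E} {t C : ℝ} (ht : 1 ≤ t) (hC : 0 ≤ C)
    (hT : ∀ a ∈ T, ‖a‖ ≤ C) (hST : ∀ a ∈ S, t⁻¹ • a ∈ T) (hTS : ∀ a ∈ T, t⁻¹ • a ∈ S) :
    hausdorffDist S T ≤ (t - 1) * C := by
  have ht0 : 0 < t := one_pos.trans_le ht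
  have hs : 0 ≤ 1 - t⁻¹ := sub_nonneg.2 (inv_le_one_of_one_le₀ ht)
  have hdist (a : E) : dist a (t⁻¹ • a) = (1 - t⁻¹) * ‖a‖ := by
    have hsub : a - t⁻¹ • a = (1 - t⁻¹) • a := by rw [sub_smul, one_smul]
    rw [dist_eq_norm, hsub, norm_smul, Real.norm_of_nonneg hs]
  refine hausdorffDist_le_of_mem_dist (mul_nonneg (by linarith) hC) (fun a ha => ⟨t⁻¹ • a, hST a ha, ?_⟩)
    fun a ha => ⟨t⁻¹ • a, hTS a ha, ?_⟩
  · have hnorm : ‖a‖ ≤ t * C := by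
      simpa [norm_smul, abs_of_pos ht0, inv_mul_le_iff₀ ht0] using hT _ (hST a ha)
    calc dist a (t⁻¹ • a) ≤ (1 - t⁻¹) * (t * C) := by
          rw [hdist]; exact mul_le_mul_of_nonneg_left hnorm hs
      _ = (t - 1) * C := by field_simp
  · have hs' : 1 - t⁻¹ ≤ t - 1 := by
      have := inv_le_one_of_one_le₀ ht
      nlinarith [mul_inv_cancel₀ ht0.ne']
    rw [hdist]
    exact mul_le_mul hs' (hT a ha) (norm_nonneg a) (by linarith)

section BlockAlgebra

variable {N : ℕ} {m : Fin N → ℕ}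

noncomputable def blockHSNormSq (a : BlockAlg N m) (k : Fin N) : ℝ :=
  ∑ i, ‖a k (EuclideanSpace.basisFun (Fin (m k)) ℂ i)‖ ^ 2

theorem hsNorm_eq_sqrt (μ : Fin N → ℝ) (a : BlockAlg N m) :
    hsNorm μ a = √(∑ k, μ k / m k * blockHSNormSq a k) := by
  simp only [hsNorm, blockHSNormSq,
    ← re_trace_adjoint_comp_self (a _) (EuclideanSpace.basisFun _ ℂ)]
  rfl

theorem blockHSNormSq_nonneg (a : BlockAlg N m) (k : Fin N) : 0 ≤ blockHSNormSq a k := by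
  unfold blockHSNormSq; positivity

theorem blockHSNormSq_smul (c : ℝ) (a : BlockAlg N m) (k : Fin N) :
    blockHSNormSq (c • a) k = c ^ 2 * blockHSNormSq a k := by
  simp only [blockHSNormSq, Finset.mul_sum, Pi.smul_apply, smul_apply, norm_smul, mul_pow,
    Real.norm_eq_abs, sq_abs]

theorem norm_le_sqrt_blockHSNormSq (a : BlockAlg N m) (k : Fin N) :
    ‖a k‖ ≤ √(blockHSNormSq a k) :=
  opNorm_le_sqrt_sum_sq_norm_apply _ _

theorem hsNorm_smul (μ : Fin N → ℝ) (c : ℝ) (a : BlockAlg N m) :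
    hsNorm μ (c • a) = |c| * hsNorm μ a := by
  simp only [hsNorm_eq_sqrt, blockHSNormSq_smul, mul_left_comm _ (c ^ 2), ← Finset.mul_sum,
    Real.sqrt_mul (sq_nonneg c), Real.sqrt_sq_eq_abs]

theorem hsNorm_le_sqrt_mul {μ ν : Fin N → ℝ} {c : ℝ} (hν : ∀ k, 0 ≤ ν k)
    (h : ∀ k, μ k ≤ c * ν k) (a : BlockAlg N m) : hsNorm μ a ≤ √c * hsNorm ν a := by
  rw [hsNorm_eq_sqrt, hsNorm_eq_sqrt, ← Real.sqrt_mul' _ (Finset.sum_nonneg fun k _ =>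
    mul_nonneg (div_nonneg (hν k) (Nat.cast_nonneg _)) (blockHSNormSq_nonneg a k)), Finset.mul_sum]
  refine Real.sqrt_le_sqrt (Finset.sum_le_sum fun k _ => ?_)
  rw [← mul_assoc, ← mul_div_assoc]
  gcongr
  · exact blockHSNormSq_nonneg a k
  · exact h k

theorem inv_smul_mem_hsBall {μ ν : Fin N → ℝ} {t : ℝ} (ht : 0 < t) (hν : ∀ k, 0 ≤ ν k)
    (h : ∀ k, μ k ≤ t ^ 2 * ν k) {a : BlockAlg N m} (ha : a ∈ hsBall ν) :
    t⁻¹ • a ∈ hsBall μ := by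
  have hle := hsNorm_le_sqrt_mul hν h a
  rw [Real.sqrt_sq ht.le] at hle
  show hsNorm μ (t⁻¹ • a) ≤ 1
  rw [hsNorm_smul, abs_inv, abs_of_pos ht, inv_mul_le_one₀ ht]
  exact hle.trans (mul_le_of_le_one_right ht.le ha)

theorem norm_le_of_mem_hsBall {μ : Fin N → ℝ} (hμ : ∀ k, 0 < μ k) {a : BlockAlg N m}
    (ha : a ∈ hsBall μ) : ‖a‖ ≤ √(∑ k, (m k : ℝ) / μ k) := by
  have hterm_nonneg (j : Fin N) : 0 ≤ μ j / m j * blockHSNormSq a j :=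
    mul_nonneg (div_nonneg (hμ j).le (Nat.cast_nonneg _)) (blockHSNormSq_nonneg a j)
  have hsum : ∑ k, μ k / m k * blockHSNormSq a k ≤ 1 :=
    Real.sqrt_le_one.1 ((hsNorm_eq_sqrt μ a).symm.trans_le ha)
  refine (pi_norm_le_iff_of_nonneg (Real.sqrt_nonneg _)).2 fun k =>
    (norm_le_sqrt_blockHSNormSq a k).trans (Real.sqrt_le_sqrt ?_)
  calc blockHSNormSq a k ≤ m k / μ k := ?_
    _ ≤ ∑ j, (m j : ℝ) / μ j :=
      Finset.single_le_sum (fun j _ => div_nonneg (Nat.cast_nonneg _) (hμ j).le)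
        (Finset.mem_univ k)
  rcases (m k).eq_zero_or_pos with h0 | hpos
  · have : IsEmpty (Fin (m k)) := by rw [h0]; infer_instance
    simp [blockHSNormSq, h0]
  · have hk := (Finset.single_le_sum (fun j _ => hterm_nonneg j) (Finset.mem_univ k)).trans hsum
    rwa [div_mul_eq_mul_div, div_le_one (by positivity), ← le_div_iff₀' (hμ k)] at hk

theorem hausdorffDist_hsBall_le {μ ν : Fin N → ℝ} {t : ℝ} (hμ : ∀ k, 0 < μ k) (hν : ∀ k, 0 < ν k)
    (ht : 1 ≤ t) (hμν : ∀ k, μ k ≤ t ^ 2 * ν k) (hνμ : ∀ k, ν k ≤ t ^ 2 * μ k) :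
    Metric.hausdorffDist (hsBall (m := m) μ) (hsBall ν) ≤ (t - 1) * √(∑ k, (m k : ℝ) / ν k) :=
  Metric.hausdorffDist_le_of_inv_smul_mem ht (Real.sqrt_nonneg _)
    (fun _ => norm_le_of_mem_hsBall hν)
    (fun _ => inv_smul_mem_hsBall (one_pos.trans_le ht) (fun k => (hμ k).le) hνμ)
    (fun _ => inv_smul_mem_hsBall (one_pos.trans_le ht) (fun k => (hν k).le) hμν)

end BlockAlgebra

theorem hausdorffDist_hsBall_tendsto_zero_general
    {N : ℕ} (m : Fin N → ℕ)
    (μ : ℕ → Fin N → ℝ) (μlim : Fin N → ℝ)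
    (hμpos : ∀ n k, 0 < μ n k) (hμlimpos : ∀ k, 0 < μlim k)
    (hconv : ∀ k, Tendsto (fun n => μ n k) atTop (𝓝 (μlim k))) :
    Tendsto
      (fun n => Metric.hausdorffDist (hsBall (m := m) (μ n)) (hsBall (m := m) μlim))
      atTop (𝓝 0) := by
  set C := √(∑ k, (m k : ℝ) / μlim k)
  have hclose : ∀ t > 1, ∀ᶠ n in atTop,
      Metric.hausdorffDist (hsBall (m := m) (μ n)) (hsBall μlim) ≤ (t - 1) * C := by
    intro t ht
    have ht2 : 1 < t ^ 2 := one_lt_pow₀ ht two_ne_zero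
    have hcomparable (k : Fin N) : ∀ᶠ n in atTop, μ n k < t ^ 2 * μlim k ∧ μlim k < t ^ 2 * μ n k :=
      ((hconv k).eventually_lt_const (lt_mul_left (hμlimpos k) ht2)).and
        (((hconv k).const_mul (t ^ 2)).eventually_const_lt (lt_mul_left (hμlimpos k) ht2))
    filter_upwards [eventually_all.2 hcomparable] with n hn
    exact hausdorffDist_hsBall_le (hμpos n) hμlimpos ht.le (fun k => (hn k).1.le)
      (fun k => (hn k).2.le)
  refine tendsto_order.2 ⟨fun ε hε => .of_forall fun n => hε.trans_le Metric.hausdorffDist_nonneg,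
    fun ε hε => ?_⟩
  have hC : 0 ≤ C := Real.sqrt_nonneg _
  have hεC : (1 + ε / (C + 1) - 1) * C < ε := by
    rw [add_sub_cancel_left, div_mul_eq_mul_div, div_lt_iff₀ (by positivity)]
    nlinarith
  exact (hclose _ (lt_add_of_pos_right 1 (by positivity))).mono fun n hn => hn.trans_lt hεC

/-- If `μⁿ → μ^∞` componentwise (all entries positive), then
`Haus_{‖·‖_A}(D_{μⁿ}, D_{μ^∞}) → 0`. -/
theorem hausdorffDist_hsBall_tendsto_zero
    {N : ℕ} (hN : 1 ≤ N) (m : Fin N → ℕ) (hm : ∀ k, 1 ≤ m k)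
    (μ : ℕ → Fin N → ℝ) (μlim : Fin N → ℝ)
    (hμpos : ∀ n k, 0 < μ n k) (hμlimpos : ∀ k, 0 < μlim k)
    (hconv : ∀ k, Tendsto (fun n => μ n k) atTop (𝓝 (μlim k))) :
    Tendsto
      (fun n => Metric.hausdorffDist (hsBall (m := m) (μ n)) (hsBall (m := m) μlim))
      atTop (𝓝 0) :=
  hausdorffDist_hsBall_tendsto_zero_general m μ μlim hμpos hμlimpos hconv
end

section
/- For a vector of positive reals μ of length N, let c(μ) be the infimum of the set of reals c ≥ 0 such that ‖a‖_A ≤ c·‖a‖_μ for every a ∈ A (this infimum is attained and c(μ) ≥ 1 when Σ_k μ_k = 1). Let μ^∞ and, for each n ∈ ℕ, μ^n be vectors of positive reals of length N such that μ^n_k → μ^∞_k for each k ∈ {1,…,N}. Then c(μ^n) → c(μ^∞) as n → ∞. -/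
open Filter Topology

/-- The sharp constant `c(μ)`: the least `c ≥ 0` such that `‖a‖_A ≤ c · ‖a‖_μ` for all
`a ∈ A`. -/
noncomputable def sharpConst {N : ℕ} {m : Fin N → ℕ} (μ : Fin N → ℝ) : ℝ :=
  sInf {c : ℝ | 0 ≤ c ∧ ∀ a : BlockAlg N m, ‖a‖ ≤ c * hsNorm μ a}

/-!
On each block the operator norm is dominated by the Hilbert–Schmidt norm (expand in an
orthonormal basis and apply Cauchy–Schwarz), with equality on rank-one projections. Placing
such a projection in a single block shows that the sharp constant is exactly
`c(μ) = maxₖ √(m k / μ k)`, which visibly depends continuously on `μ` where `μ` is positive.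
-/

open ContinuousLinearMap InnerProductSpace Module

section HilbertSchmidt

variable {𝕜 E : Type*} [RCLike 𝕜] [NormedAddCommGroup E] [InnerProductSpace 𝕜 E]
  [CompleteSpace E]

noncomputable def hsNormSq (a : E →L[𝕜] E) : ℝ :=
  RCLike.re (LinearMap.trace 𝕜 E (adjoint a ∘L a : E →L[𝕜] E))

theorem hsNormSq_eq_sum {ι : Type*} [Fintype ι] (b : OrthonormalBasis ι 𝕜 E) (a : E →L[𝕜] E) :
    hsNormSq a = ∑ i, ‖a (b i)‖ ^ 2 := by
  rw [hsNormSq, LinearMap.trace_eq_sum_inner _ b, map_sum]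
  refine Fintype.sum_congr _ _ fun i => ?_
  rw [coe_coe, comp_apply, adjoint_inner_right, inner_self_eq_norm_sq]

theorem hsNormSq_zero : hsNormSq (0 : E →L[𝕜] E) = 0 := by
  simp [hsNormSq]

variable [FiniteDimensional 𝕜 E]

theorem hsNormSq_nonneg (a : E →L[𝕜] E) : 0 ≤ hsNormSq a := by
  rw [hsNormSq_eq_sum (stdOrthonormalBasis 𝕜 E)]
  positivity

theorem hsNormSq_eq_zero_of_finrank_eq_zero (h : finrank 𝕜 E = 0) (a : E →L[𝕜] E) :
    hsNormSq a = 0 := by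
  have : IsEmpty (Fin (finrank 𝕜 E)) := by rw [h]; infer_instance
  simp [hsNormSq_eq_sum (stdOrthonormalBasis 𝕜 E)]

theorem hsNormSq_rankOne_self {e : E} (he : ‖e‖ = 1) : hsNormSq (rankOne 𝕜 e e) = 1 := by
  simp [hsNormSq, rankOne_comp_rankOne, trace_rankOne, inner_self_eq_norm_sq_to_K, he]

theorem norm_le_sqrt_hsNormSq (a : E →L[𝕜] E) : ‖a‖ ≤ √(hsNormSq a) := by
  set b := stdOrthonormalBasis 𝕜 E
  refine a.opNorm_le_bound (Real.sqrt_nonneg _) fun x => ?_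
  calc ‖a x‖ = ‖∑ i, ⟪b i, x⟫_𝕜 • a (b i)‖ := by
        simp_rw [← map_smul, ← map_sum, b.sum_repr']
    _ ≤ ∑ i, ‖⟪b i, x⟫_𝕜‖ * ‖a (b i)‖ := by
        refine (norm_sum_le _ _).trans_eq ?_
        simp only [norm_smul]
    _ ≤ √(∑ i, ‖⟪b i, x⟫_𝕜‖ ^ 2) * √(∑ i, ‖a (b i)‖ ^ 2) :=
        Real.sum_mul_le_sqrt_mul_sqrt _ _ _
    _ = √(hsNormSq a) * ‖x‖ := by
        rw [b.sum_sq_norm_inner_right, ← hsNormSq_eq_sum, Real.sqrt_sq (norm_nonneg x), mul_comm]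

theorem norm_le_sqrt_finrank_div_mul_sqrt {w : ℝ} (hw : 0 < w) (a : E →L[𝕜] E) :
    ‖a‖ ≤ √(finrank 𝕜 E / w) * √(w / finrank 𝕜 E * hsNormSq a) := by
  rcases (finrank 𝕜 E).eq_zero_or_pos with hd | hd
  · simpa [hd, hsNormSq_eq_zero_of_finrank_eq_zero hd] using norm_le_sqrt_hsNormSq a
  have hw' : finrank 𝕜 E / w * (w / finrank 𝕜 E) = 1 := by field_simp
  rw [← Real.sqrt_mul (by positivity), ← mul_assoc, hw', one_mul]
  exact norm_le_sqrt_hsNormSq a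

end HilbertSchmidt

section WeightedHilbertSchmidt

variable {𝕜 ι : Type*} [RCLike 𝕜] [Fintype ι] {E : ι → Type*}
  [∀ k, NormedAddCommGroup (E k)] [∀ k, InnerProductSpace 𝕜 (E k)] [∀ k, CompleteSpace (E k)]

noncomputable def weightedHSNorm (μ : ι → ℝ) (a : ∀ k, E k →L[𝕜] E k) : ℝ :=
  √(∑ k, μ k / finrank 𝕜 (E k) * hsNormSq (a k))

theorem weightedHSNorm_single [DecidableEq ι] (μ : ι → ℝ) (k : ι) (x : E k →L[𝕜] E k) :
    weightedHSNorm μ (Pi.single k x) = √(μ k / finrank 𝕜 (E k) * hsNormSq x) := by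
  rw [weightedHSNorm, Fintype.sum_eq_single k fun j hj => by
    rw [Pi.single_eq_of_ne hj, hsNormSq_zero, mul_zero], Pi.single_eq_same]

variable [∀ k, FiniteDimensional 𝕜 (E k)]

theorem isLeast_setOf_norm_le_mul_weightedHSNorm {μ : ι → ℝ} (hμ : ∀ k, 0 < μ k) :
    IsLeast {c | 0 ≤ c ∧ ∀ a : ∀ k, E k →L[𝕜] E k, ‖a‖ ≤ c * weightedHSNorm μ a}
      (⨆ k, √(finrank 𝕜 (E k) / μ k)) := by
  classical
  have hC : 0 ≤ ⨆ k, √(finrank 𝕜 (E k) / μ k) := Real.iSup_nonneg fun k => Real.sqrt_nonneg _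
  refine ⟨⟨hC, fun a => ?_⟩, ?_⟩
  · have hterm (j : ι) : 0 ≤ μ j / finrank 𝕜 (E j) * hsNormSq (a j) := by
      have := hsNormSq_nonneg (a j)
      have := hμ j
      positivity
    refine (pi_norm_le_iff_of_nonneg (mul_nonneg hC (Real.sqrt_nonneg _))).2 fun k => ?_
    calc ‖a k‖ ≤ √(finrank 𝕜 (E k) / μ k) * √(μ k / finrank 𝕜 (E k) * hsNormSq (a k)) :=
          norm_le_sqrt_finrank_div_mul_sqrt (hμ k) (a k)
      _ ≤ (⨆ j, √(finrank 𝕜 (E j) / μ j)) * weightedHSNorm μ a := by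
          gcongr
          · exact le_ciSup (f := fun j => √(finrank 𝕜 (E j) / μ j)) (Finite.bddAbove_range _) k
          · exact Real.sqrt_le_sqrt (Finset.single_le_sum (fun j _ => hterm j) (Finset.mem_univ k))
  · rintro c ⟨hc0, hc⟩
    refine Real.iSup_le (fun k => ?_) hc0
    rcases (finrank 𝕜 (E k)).eq_zero_or_pos with hd | hd
    · simpa [hd] using hc0
    set e := stdOrthonormalBasis 𝕜 (E k) ⟨0, hd⟩
    have he : ‖e‖ = 1 := (stdOrthonormalBasis 𝕜 (E k)).norm_eq_one _
    have h := hc (Pi.single k (rankOne 𝕜 e e))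
    rw [Pi.norm_single, norm_rankOne, he, weightedHSNorm_single, hsNormSq_rankOne_self he,
      mul_one, mul_one] at h
    have hw : 0 < √(μ k / finrank 𝕜 (E k)) := Real.sqrt_pos.2 (div_pos (hμ k) (Nat.cast_pos.2 hd))
    rwa [← inv_div, Real.sqrt_inv, inv_le_iff_one_le_mul₀ hw]

end WeightedHilbertSchmidt

theorem tendsto_iSup_of_tendsto {α ι : Type*} [Finite ι] {l : Filter α} {f : α → ι → ℝ}
    {g : ι → ℝ} (h : ∀ k, Tendsto (fun n => f n k) l (𝓝 (g k))) :
    Tendsto (fun n => ⨆ k, f n k) l (𝓝 (⨆ k, g k)) := by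
  cases isEmpty_or_nonempty ι
  · simpa using tendsto_const_nhds
  have := Fintype.ofFinite ι
  simp only [← Finset.sup'_univ_eq_ciSup]
  exact Tendsto.finset_sup'_nhds_apply _ fun k _ => h k

theorem hsNorm_eq_weightedHSNorm {N : ℕ} {m : Fin N → ℕ} (μ : Fin N → ℝ) (a : BlockAlg N m) :
    hsNorm μ a = weightedHSNorm μ a := by
  simp only [hsNorm, weightedHSNorm, hsNormSq, finrank_euclideanSpace_fin, RCLike.re_to_complex]

theorem sharpConst_eq_iSup {N : ℕ} {m : Fin N → ℕ} {μ : Fin N → ℝ} (hμ : ∀ k, 0 < μ k) :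
    sharpConst (m := m) μ = ⨆ k, √(m k / μ k) := by
  have h := isLeast_setOf_norm_le_mul_weightedHSNorm (𝕜 := ℂ)
    (E := fun k => EuclideanSpace ℂ (Fin (m k))) hμ
  simpa only [sharpConst, hsNorm_eq_weightedHSNorm, finrank_euclideanSpace_fin] using h.csInf_eq

theorem sharpConst_tendsto_general
    {N : ℕ} (m : Fin N → ℕ)
    (μ : ℕ → Fin N → ℝ) (μlim : Fin N → ℝ)
    (hμlimpos : ∀ k, 0 < μlim k)
    (hconv : ∀ k, Tendsto (fun n => μ n k) atTop (𝓝 (μlim k))) :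
    Tendsto (fun n => sharpConst (m := m) (μ n)) atTop (𝓝 (sharpConst (m := m) μlim)) := by
  have hpos : ∀ᶠ n in atTop, ∀ k, 0 < μ n k :=
    eventually_all.2 fun k => (hconv k).eventually (lt_mem_nhds (hμlimpos k))
  rw [sharpConst_eq_iSup hμlimpos]
  refine (tendsto_iSup_of_tendsto fun k =>
    (tendsto_const_nhds.div (hconv k) (hμlimpos k).ne').sqrt).congr' ?_
  filter_upwards [hpos] with n hn using (sharpConst_eq_iSup hn).symm

/-- If the positive weight vectors `μⁿ` converge componentwise to the
positive weight vector `μ^∞`, then the sharp constants converge: `c(μⁿ) → c(μ^∞)`. -/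
theorem sharpConst_tendsto
    {N : ℕ} (hN : 1 ≤ N) (m : Fin N → ℕ) (hm : ∀ k, 1 ≤ m k)
    (μ : ℕ → Fin N → ℝ) (μlim : Fin N → ℝ)
    (hμpos : ∀ n k, 0 < μ n k) (hμlimpos : ∀ k, 0 < μlim k)
    (hconv : ∀ k, Tendsto (fun n => μ n k) atTop (𝓝 (μlim k))) :
    Tendsto (fun n => sharpConst (m := m) (μ n)) atTop (𝓝 (sharpConst (m := m) μlim)) :=
  sharpConst_tendsto_general m μ μlim hμlimpos hconv
end
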